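/- arXiv:1901.04381 — 5 statements merged into one kernel-verified Lean document; each statement's English description precedes it below -/
import Mathlib

section
/- Let G be a finite group, K a normal subgroup of G, and A a subgroup of G that is NS-supplemented in G with NS-supplement B. Then AK/K is NS-supplemented in G/K, and BK/K is an NS-supplement of AK/K in G/K. -/
open Subgroup Pointwise

/-- `B` is an NS-supplement of `A` in `G`. -/
def IsNSSupplementOf {G : Type*} [Group G] (A B : Subgroup G) : Prop :=
  (A : Set G) * (B : Set G) = Set.univ ∧
  ∀ X : Subgroup G, X ≤ A → (X.subgroupOf A).Normal →
    ∀ p : ℕ, p.Prime → p ∣ Nat.card B →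
      ∃ Bp : Sylow p B,
        (X : Set G) * (((Bp : Subgroup B).map B.subtype : Subgroup G) : Set G) =
        (((Bp : Subgroup B).map B.subtype : Subgroup G) : Set G) * (X : Set G)

/-- `A` is NS-supplemented in `G`. -/
def IsNSSupplemented {G : Type*} [Group G] (A : Subgroup G) : Prop :=
  ∃ B : Subgroup G, IsNSSupplementOf A B

/-- Supersolvable: a normal series with cyclic factors. -/
def IsSupersolvableGroup (G : Type*) [Group G] : Prop :=
  ∃ σ : ℕ → Subgroup G, Monotone σ ∧ σ 0 = ⊥ ∧ (∃ n, σ n = ⊤) ∧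
    (∀ n, (σ n).Normal) ∧ ∀ n, ∃ g : G, σ (n + 1) = σ n ⊔ Subgroup.zpowers g

/-- p-solvable: a normal series whose factors are p-groups or p'-groups. -/
def IsPSolvableGroup (p : ℕ) (G : Type*) [Group G] : Prop :=
  ∃ σ : ℕ → Subgroup G, Monotone σ ∧ σ 0 = ⊥ ∧ (∃ n, σ n = ⊤) ∧
    (∀ n, (σ n).Normal) ∧
    ∀ n, (∃ k, (σ n).relIndex (σ (n + 1)) = p ^ k) ∨ ¬ p ∣ (σ n).relIndex (σ (n + 1))

/-- p-supersolvable: a normal series whose factors have order p or are p'-groups. -/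
def IsPSupersolvableGroup (p : ℕ) (G : Type*) [Group G] : Prop :=
  ∃ σ : ℕ → Subgroup G, Monotone σ ∧ σ 0 = ⊥ ∧ (∃ n, σ n = ⊤) ∧
    (∀ n, (σ n).Normal) ∧
    ∀ n, (σ n).relIndex (σ (n + 1)) = p ∨ ¬ p ∣ (σ n).relIndex (σ (n + 1))

/-- p-nilpotent: existence of a normal p-complement. -/
def IsPNilpotent (p : ℕ) (G : Type*) [Group G] : Prop :=
  ∃ N : Subgroup G, N.Normal ∧ ¬ p ∣ Nat.card N ∧ ∃ k, N.index = p ^ k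

/-- The projective special linear group PSL(2,7). -/
abbrev PSL27 :=
  Matrix.SpecialLinearGroup (Fin 2) (ZMod 7) ⧸
    Subgroup.center (Matrix.SpecialLinearGroup (Fin 2) (ZMod 7))

namespace Subgroup

variable {G H : Type*} [Group G] [Group H] (f : G →* H)

theorem map_comap_inf_eq_of_le_map {A : Subgroup G} {X : Subgroup H} (hX : X ≤ A.map f) :
    (X.comap f ⊓ A).map f = X := by
  refine le_antisymm (map_le_iff_le_comap.mpr inf_le_left) fun x hx => ?_
  obtain ⟨a, ha, rfl⟩ := hX hx
  exact ⟨a, ⟨hx, ha⟩, rfl⟩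

theorem normal_comap_inf_subgroupOf {A : Subgroup G} {X : Subgroup H}
    (hX : (X.subgroupOf (A.map f)).Normal) : ((X.comap f ⊓ A).subgroupOf A).Normal := by
  have : (X.comap f ⊓ A).subgroupOf A = (X.subgroupOf (A.map f)).comap (f.subgroupMap A) := by
    ext a
    simp [mem_subgroupOf]
  rw [this]
  exact hX.comap _

theorem coe_map_mul_comm {X P : Subgroup G} (h : (X : Set G) * P = P * X) :
    (X.map f : Set H) * P.map f = P.map f * X.map f := by
  simp only [coe_map, ← Set.image_mul, h]

end Subgroup

theorem Sylow.map_subtype_mapSurjective {G H : Type*} [Group G] [Group H] [Finite G]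
    (f : G →* H) (B : Subgroup G) {p : ℕ} [Fact p.Prime] (P : Sylow p B) :
    ((P.mapSurjective (f.subgroupMap_surjective B) : Subgroup (B.map f)).map (B.map f).subtype) =
      ((P : Subgroup B).map B.subtype).map f := by
  rw [Sylow.coe_mapSurjective, map_map, map_map]
  rfl

theorem IsNSSupplementOf.map_of_surjective {G H : Type*} [Group G] [Group H] [Finite G]
    {f : G →* H} (hf : Function.Surjective f) {A B : Subgroup G} (h : IsNSSupplementOf A B) :
    IsNSSupplementOf (A.map f) (B.map f) := by
  refine ⟨?_, fun X hXA hX p hp hpB => ?_⟩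
  · rw [coe_map, coe_map, ← Set.image_mul, h.1, Set.image_univ, Set.range_eq_univ.mpr hf]
  have : Fact p.Prime := ⟨hp⟩
  -- Lift `X` to `f⁻¹(X) ∩ A`, normal in `A` with image `X`; images of Sylow subgroups are Sylow.
  obtain ⟨P, hP⟩ := h.2 (X.comap f ⊓ A) inf_le_right (normal_comap_inf_subgroupOf f hX) p hp
    (hpB.trans (card_dvd_of_surjective _ (f.subgroupMap_surjective B)))
  refine ⟨P.mapSurjective (f.subgroupMap_surjective B), ?_⟩
  rw [Sylow.map_subtype_mapSurjective, ← map_comap_inf_eq_of_le_map f hXA]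
  exact coe_map_mul_comm f hP

/-- If `K ⊴ G` and `B` is an NS-supplement of `A` in `G`, then `BK/K` is an
NS-supplement of `AK/K` in `G/K`. -/
theorem stmt1 {G : Type*} [Group G] [Finite G] (K : Subgroup G) [K.Normal]
    (A B : Subgroup G) (h : IsNSSupplementOf A B) :
    IsNSSupplementOf (A.map (QuotientGroup.mk' K)) (B.map (QuotientGroup.mk' K)) :=
  h.map_of_surjective (QuotientGroup.mk'_surjective K)
end

section
/- Let G be a finite group in which every maximal subgroup is NS-supplemented in G. Then every maximal subgroup of G has prime power index. -/
open Subgroup Pointwise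

/-! Let `M` be maximal with NS-supplement `B`. As `MB = G` and `M ≠ G`, some prime `q` divides
`|B : B ∩ M| = |G : M|`, so no Sylow `q`-subgroup of `B` lies in `M`. Taking `X = M`, some Sylow
`q`-subgroup `Q` of `B` permutes with `M`; then `MQ` is a subgroup properly containing `M`, so
`MQ = G` and `|G : M| = |Q : Q ∩ M|` is a power of `q`. -/

namespace Subgroup

variable {G : Type*} [Group G]

theorem coe_sup_eq_mul_of_mul_comm {H K : Subgroup G}
    (hc : (H : Set G) * K = K * H) : ((H ⊔ K : Subgroup G) : Set G) = H * K := by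
  have hmul : (H : Set G) * K * (H * K) = H * K := by
    rw [mul_assoc, ← mul_assoc (K : Set G), ← hc, mul_assoc, ← mul_assoc (H : Set G),
      coe_mul_coe, coe_mul_coe]
  have hinv : ((H : Set G) * K)⁻¹ = H * K := by
    rw [mul_inv_rev, inv_coe_set, inv_coe_set, hc]
  rw [sup_eq_closure_mul]
  refine Set.Subset.antisymm (fun x hx => ?_) subset_closure
  induction hx using closure_induction with
  | mem x hx => exact hx
  | one => exact ⟨1, one_mem _, 1, one_mem _, mul_one 1⟩
  | mul x y _ _ hx hy => exact hmul ▸ Set.mul_mem_mul hx hy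
  | inv x _ hx => exact hinv ▸ Set.inv_mem_inv.mpr hx

theorem relIndex_eq_index_of_mul_eq_univ {H K : Subgroup G}
    (hc : (H : Set G) * (K : Set G) = Set.univ) : H.relIndex K = H.index := by
  have hsmul (k : K) : k • ((1 : G) : G ⧸ H) = ((k : G) : G ⧸ H) := by
    change (k : G) • ((1 : G) : G ⧸ H) = _
    rw [MulAction.Quotient.smul_coe, smul_eq_mul, mul_one]
  have hstab : MulAction.stabilizer K ((1 : G) : G ⧸ H) = H.subgroupOf K := by
    ext k
    rw [MulAction.mem_stabilizer_iff, hsmul, mem_subgroupOf, QuotientGroup.eq, mul_one, inv_mem_iff]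
  have horbit : MulAction.orbit K ((1 : G) : G ⧸ H) = Set.univ := by
    refine Set.eq_univ_of_forall fun x => ?_
    induction x using QuotientGroup.induction_on with | H g => ?_
    obtain ⟨h, hh, k, hk, hhk⟩ := hc.symm ▸ Set.mem_univ g⁻¹
    refine ⟨⟨k⁻¹, inv_mem hk⟩, ?_⟩
    dsimp only at hhk ⊢
    rw [hsmul, QuotientGroup.eq, ← inv_inv g, ← hhk]
    simpa using hh
  rw [relIndex, ← hstab, MulAction.index_stabilizer, horbit, Set.ncard_univ]
  rfl

theorem _root_.Sylow.not_le_of_dvd_index {p : ℕ} [Fact p.Prime] (P : Sylow p G)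
    [P.FiniteIndex] {H : Subgroup G} (hH : p ∣ H.index) : ¬ (P : Subgroup G) ≤ H :=
  fun hle => P.not_dvd_index (hH.trans (index_dvd_of_le hle))

theorem _root_.IsCoatom.index_dvd_card_of_mul_comm {M N : Subgroup G} (hM : IsCoatom M)
    (hc : (M : Set G) * N = N * M) (hN : ¬ N ≤ M) : M.index ∣ Nat.card N := by
  have hMN : (M : Set G) * (N : Set G) = Set.univ := by
    rw [← coe_sup_eq_mul_of_mul_comm hc, hM.2 _ (left_lt_sup.mpr hN), coe_top]
  exact relIndex_eq_index_of_mul_eq_univ hMN ▸ M.relIndex_dvd_card N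

end Subgroup

/-- If every maximal subgroup of `G` is NS-supplemented in `G`, then every
maximal subgroup of `G` has prime power index. -/
theorem stmt8 {G : Type*} [Group G] [Finite G]
    (h : ∀ M : Subgroup G, IsCoatom M → IsNSSupplemented M) :
    ∀ M : Subgroup G, IsCoatom M → ∃ r k : ℕ, r.Prime ∧ M.index = r ^ k := by
  intro M hM
  obtain ⟨B, hMB, hperm⟩ := h M hM
  have hindex : M.relIndex B = M.index := Subgroup.relIndex_eq_index_of_mul_eq_univ hMB
  obtain ⟨q, hq, hqM⟩ := Nat.exists_prime_and_dvd (mt Subgroup.index_eq_one.mp hM.1)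
  have := Fact.mk hq
  rw [← hindex] at hqM
  obtain ⟨P, hPperm⟩ := hperm M le_rfl (by rw [Subgroup.subgroupOf_self]; infer_instance) q hq
    (hqM.trans (M.relIndex_dvd_card B))
  have hPnle : ¬ (P : Subgroup B).map B.subtype ≤ M := fun hle =>
    P.not_le_of_dvd_index hqM (Subgroup.map_le_iff_le_comap.mp hle)
  obtain ⟨k, hk⟩ := IsPGroup.iff_card.mp (P.2.map B.subtype)
  have hdvd := hM.index_dvd_card_of_mul_comm hPperm hPnle
  obtain ⟨j, -, hj⟩ := (Nat.dvd_prime_pow hq).mp (hk ▸ hdvd)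
  exact ⟨q, j, hq, hj⟩
end

section
/- Let G be a finite group, p a prime, P a Sylow p-subgroup of G that is NS-supplemented in G with supplement B. Then for every prime q ∈ π(B) \ {p}, G has a Hall {p,q}-subgroup, namely PQ for some Sylow q-subgroup Q of B, and hence G has a Hall {p,r}-subgroup for every prime r dividing |G|. -/
open Subgroup Pointwise

/-- A Hall `{p,q}`-subgroup: its order is a `{p,q}`-number and its index is a
`{p,q}'`-number. -/
def IsHallPQSubgroup {G : Type*} [Group G] (p q : ℕ) (H : Subgroup G) : Prop :=
  (∀ r : ℕ, r.Prime → r ∣ Nat.card H → r = p ∨ r = q) ∧ ¬ p ∣ H.index ∧ ¬ q ∣ H.index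

/-!
Taking `X = P` in the definition, `P` permutes with a Sylow `q`-subgroup `Q` of `B`, so `PQ`
is a subgroup, of order dividing `|P| |Q|`. Since `G = PB`, the index `|G : B|` divides `|P|`,
so it is a power of `p`; hence `Q` is a Sylow `q`-subgroup of `G` and every prime `r ≠ p`
dividing `|G|` divides `|B|`. The subgroup `PQ` contains a Sylow `p`- and a Sylow
`q`-subgroup of `G`, so it is a Hall `{p,q}`-subgroup.
-/

theorem IsPGroup.eq_of_prime_dvd_card {p r : ℕ} [Fact p.Prime] {G : Type*} [Group G] [Finite G]
    (hG : IsPGroup p G) (hr : r.Prime) (hrG : r ∣ Nat.card G) : r = p := by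
  obtain ⟨n, hn⟩ := IsPGroup.iff_card.mp hG
  rw [hn] at hrG
  exact (Nat.prime_dvd_prime_iff_eq hr Fact.out).mp (hr.dvd_of_dvd_pow hrG)

namespace Subgroup

variable {G : Type*} [Group G]

theorem card_image_mk_dvd_card (H K : Subgroup G) :
    Nat.card (QuotientGroup.mk '' (H : Set G) : Set (G ⧸ K)) ∣ Nat.card H := by
  have horbit : QuotientGroup.mk '' (H : Set G) = MulAction.orbit H ((1 : G) : G ⧸ K) := by
    ext x
    constructor
    · rintro ⟨g, hg, rfl⟩
      exact ⟨⟨g, hg⟩, congrArg _ (mul_one g)⟩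
    · rintro ⟨⟨g, hg⟩, rfl⟩
      exact ⟨g, hg, congrArg _ (mul_one g).symm⟩
  rw [horbit, Nat.card_coe_set_eq, ← MulAction.index_stabilizer]
  exact index_dvd_card _

theorem card_mul_dvd_card_mul_card (H K : Subgroup G) :
    Nat.card ((H : Set G) * (K : Set G) : Set G) ∣ Nat.card H * Nat.card K := by
  rw [card_mul_eq_card_subgroup_mul_card_quotient, mul_comm (Nat.card H)]
  exact mul_dvd_mul_left _ (card_image_mk_dvd_card H K)

theorem index_dvd_card_of_mul_eq_univ [Finite G] {H K : Subgroup G}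
    (hHK : (H : Set G) * (K : Set G) = Set.univ) : K.index ∣ Nat.card H := by
  have hcard := card_mul_eq_card_subgroup_mul_card_quotient K H
  rw [hHK, Nat.card_univ, ← card_mul_index K] at hcard
  rw [Nat.mul_left_cancel Nat.card_pos hcard]
  exact card_image_mk_dvd_card H K

theorem coe_sup_of_mul_comm {H K : Subgroup G}
    (hHK : (H : Set G) * (K : Set G) = (K : Set G) * (H : Set G)) :
    ((H ⊔ K : Subgroup G) : Set G) = (H : Set G) * (K : Set G) := by
  have hmul : ((H : Set G) * K) * ((H : Set G) * K) = (H : Set G) * K := by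
    rw [mul_assoc, ← mul_assoc (K : Set G), ← hHK, mul_assoc, ← mul_assoc (H : Set G),
      coe_mul_coe, coe_mul_coe]
  let S : Subgroup G :=
    { carrier := (H : Set G) * K
      one_mem' := ⟨1, H.one_mem, 1, K.one_mem, one_mul 1⟩
      mul_mem' := fun ha hb => hmul ▸ Set.mul_mem_mul ha hb
      inv_mem' := fun {a} ha => by
        have hinv := Set.inv_mem_inv.mpr ha
        rwa [mul_inv_rev, inv_coe_set, inv_coe_set, ← hHK] at hinv }
  refine le_antisymm (show H ⊔ K ≤ S from sup_le (fun h hh => ?_) (fun k hk => ?_)) ?_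
  · exact ⟨h, hh, 1, K.one_mem, mul_one h⟩
  · exact ⟨1, H.one_mem, k, hk, one_mul k⟩
  · rintro _ ⟨h, hh, k, hk, rfl⟩
    exact mul_mem_sup hh hk

theorem eq_of_prime_dvd_index_of_mul_eq_univ [Finite G] {p r : ℕ} [Fact p.Prime]
    {H K : Subgroup G} (hH : IsPGroup p H) (hHK : (H : Set G) * (K : Set G) = Set.univ)
    (hr : r.Prime) (hrK : r ∣ K.index) : r = p :=
  hH.eq_of_prime_dvd_card hr (hrK.trans (index_dvd_card_of_mul_eq_univ hHK))

end Subgroup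

open Subgroup

theorem isHallPQSubgroup_sup {G : Type*} [Group G] [Finite G] {p q : ℕ} [Fact p.Prime]
    [Fact q.Prime] {P Q : Subgroup G} (hP : IsPGroup p P) (hQ : IsPGroup q Q)
    (hPi : ¬ p ∣ P.index) (hQi : ¬ q ∣ Q.index)
    (hPQ : (P : Set G) * (Q : Set G) = (Q : Set G) * (P : Set G)) :
    IsHallPQSubgroup p q (P ⊔ Q) := by
  refine ⟨fun r hr hrS => ?_, fun h => hPi (h.trans (index_dvd_of_le le_sup_left)),
    fun h => hQi (h.trans (index_dvd_of_le le_sup_right))⟩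
  have hrPQ : r ∣ Nat.card P * Nat.card Q := by
    refine hrS.trans ?_
    rw [← SetLike.coe_sort_coe, coe_sup_of_mul_comm hPQ]
    exact card_mul_dvd_card_mul_card P Q
  exact (hr.dvd_mul.mp hrPQ).imp (hP.eq_of_prime_dvd_card hr) (hQ.eq_of_prime_dvd_card hr)

theorem IsNSSupplementOf.exists_sylow_isHallPQSubgroup {G : Type*} [Group G] [Finite G]
    {p q : ℕ} [Fact p.Prime] {P : Sylow p G} {B : Subgroup G}
    (h : IsNSSupplementOf (P : Subgroup G) B) (hq : q.Prime) (hqB : q ∣ Nat.card B)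
    (hqp : q ≠ p) :
    ∃ Q : Sylow q B, ∃ H : Subgroup G,
      (H : Set G) = ((P : Subgroup G) : Set G) *
        (((Q : Subgroup B).map B.subtype : Subgroup G) : Set G) ∧
      IsHallPQSubgroup p q H := by
  have := Fact.mk hq
  obtain ⟨Q, hPQ⟩ := h.2 P le_rfl (by rw [subgroupOf_self]; infer_instance) q hq hqB
  have hQi : ¬ q ∣ ((Q : Subgroup B).map B.subtype).index := by
    rw [index_map_subtype, hq.dvd_mul]
    exact not_or_intro Q.not_dvd_index
      (hqp ∘ eq_of_prime_dvd_index_of_mul_eq_univ P.isPGroup' h.1 hq)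
  exact ⟨Q, _, coe_sup_of_mul_comm hPQ,
    isHallPQSubgroup_sup P.isPGroup' (Q.isPGroup'.map _) P.not_dvd_index hQi hPQ⟩

/-- If a Sylow `p`-subgroup `P` of `G` is NS-supplemented with supplement
`B`, then for every prime `q ≠ p` dividing `|B|`, `G` has a Hall `{p,q}`-subgroup `PQ`
for some Sylow `q`-subgroup `Q` of `B`; hence `G` has a Hall `{p,r}`-subgroup for every
prime `r` dividing `|G|`. -/
theorem stmt10 {G : Type*} [Group G] [Finite G] (p : ℕ) (hp : p.Prime)
    (P : Sylow p G) (B : Subgroup G) (h : IsNSSupplementOf (P : Subgroup G) B) :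
    (∀ q : ℕ, q.Prime → q ∣ Nat.card B → q ≠ p →
      ∃ Q : Sylow q B, ∃ H : Subgroup G,
        (H : Set G) = ((P : Subgroup G) : Set G) *
          (((Q : Subgroup B).map B.subtype : Subgroup G) : Set G) ∧
        IsHallPQSubgroup p q H) ∧
    ∀ r : ℕ, r.Prime → r ∣ Nat.card G →
      ∃ H : Subgroup G, IsHallPQSubgroup p r H := by
  have := Fact.mk hp
  refine ⟨fun q hq hqB hqp => h.exists_sylow_isHallPQSubgroup hq hqB hqp, fun r hr hrG => ?_⟩
  by_cases hrp : r = p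
  · subst hrp
    exact ⟨_, isHallPQSubgroup_sup P.isPGroup' P.isPGroup' P.not_dvd_index P.not_dvd_index rfl⟩
  · rw [← card_mul_index B, hr.dvd_mul] at hrG
    have hrB : r ∣ Nat.card B :=
      hrG.resolve_right (hrp ∘ eq_of_prime_dvd_index_of_mul_eq_univ P.isPGroup' h.1 hr)
    obtain ⟨Q, H, -, hH⟩ := h.exists_sylow_isHallPQSubgroup hr hrB hrp
    exact ⟨H, hH⟩
end

section
/- Let G be a finite p-soluble group with O_{p'}(G) = 1, P a Sylow p-subgroup of G that is NS-supplemented in G with supplement B, and let N = O_p(G) ≠ 1. Choose a subgroup X ≤ N ∩ Z(P) with |X| = p. Then for every prime r ≠ p dividing |B| there exists a Sylow r-subgroup R of B such that XR = RX is a subgroup and N ∩ XR = X, so X is normalized by R. -/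
open Subgroup Pointwise

namespace Subgroup

variable {G : Type*} [Group G]

theorem le_normalizer_of_forall_mul_comm {X K : Subgroup G}
    (h : ∀ x ∈ X, ∀ y ∈ K, x * y = y * x) : K ≤ normalizer (X : Set G) :=
  fun y hy ↦ centralizer_le_normalizer _ (mem_centralizer_iff.mpr fun x hx ↦ h x hx y hy)

theorem inter_mul_eq_left_of_disjoint {X N R : Subgroup G} (hXN : X ≤ N) (hNR : Disjoint N R) :
    (N : Set G) ∩ ((X : Set G) * R) = X := by
  rw [Set.inter_comm, ← mul_inf_assoc X R N hXN, disjoint_iff.mp hNR.symm, coe_bot]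
  simp only [Set.mul_singleton, mul_one, Set.image_id']

/-- `XR = RX` makes `XR` a group, in which `X = N ∩ XR` is normal. -/
theorem le_normalizer_of_mul_comm_of_inter_mul_eq {X R N : Subgroup G} (hN : N.Normal)
    (hcomm : (X : Set G) * R = R * X) (hinter : (N : Set G) ∩ ((X : Set G) * R) = X) :
    R ≤ normalizer (X : Set G) := by
  have hXN : (X : Set G) ⊆ N := hinter ▸ Set.inter_subset_left
  have conj_mem : ∀ g ∈ R, ∀ x ∈ X, g * x * g⁻¹ ∈ X := by
    intro g hg x hx
    obtain ⟨x', hx', s, hs, hgx : x' * s = g * x⟩ : g * x ∈ (X : Set G) * R :=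
      hcomm ▸ Set.mul_mem_mul hg hx
    rw [← SetLike.mem_coe, ← hinter]
    exact ⟨hN.conj_mem x (hXN hx) g, x', hx', s * g⁻¹, mul_mem hs (inv_mem hg),
      show x' * (s * g⁻¹) = _ by rw [← mul_assoc, hgx]⟩
  intro g hg
  refine mem_normalizer_iff.mpr fun x ↦ ⟨conj_mem g hg x, fun hx ↦ ?_⟩
  simpa [mul_assoc] using conj_mem g⁻¹ (inv_mem hg) _ hx

end Subgroup

theorem stmt11_general {G : Type*} [Group G] (p : ℕ) (hp : p.Prime)
    (P : Sylow p G) (B : Subgroup G) (h : IsNSSupplementOf (P : Subgroup G) B)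
    (N : Subgroup G) (hN : N.Normal) (hNp : IsPGroup p N)
    (X : Subgroup G) (hXN : X ≤ N) (hXP : X ≤ (P : Subgroup G))
    (hXZ : ∀ x ∈ X, ∀ y ∈ (P : Subgroup G), x * y = y * x) :
    ∀ r : ℕ, r.Prime → r ≠ p → r ∣ Nat.card B →
      ∃ R : Sylow r B,
        (X : Set G) * (((R : Subgroup B).map B.subtype : Subgroup G) : Set G) =
          (((R : Subgroup B).map B.subtype : Subgroup G) : Set G) * (X : Set G) ∧
        (N : Set G) ∩ ((X : Set G) *
          (((R : Subgroup B).map B.subtype : Subgroup G) : Set G)) = (X : Set G) ∧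
        ((R : Subgroup B).map B.subtype : Subgroup G) ≤ Subgroup.normalizer (X : Set G) := by
  intro r hr hrp hrB
  obtain ⟨R, hcomm⟩ := h.2 X hXP
    (normal_subgroupOf_of_le_normalizer (le_normalizer_of_forall_mul_comm hXZ)) r hr hrB
  have hdisj : Disjoint N ((R : Subgroup B).map B.subtype) :=
    hNp.disjoint_of_coprime (R.isPGroup'.map B.subtype) ((Nat.coprime_primes hp hr).mpr hrp.symm)
  have hinter := inter_mul_eq_left_of_disjoint hXN hdisj
  exact ⟨R, hcomm, hinter, le_normalizer_of_mul_comm_of_inter_mul_eq hN hcomm hinter⟩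

/-- Let `G` be `p`-soluble with `O_{p'}(G) = 1`, `P` a Sylow `p`-subgroup
NS-supplemented with supplement `B`, `N = O_p(G) ≠ 1`, and `X ≤ N ∩ Z(P)` with `|X| = p`.
Then for every prime `r ≠ p` dividing `|B|` there is a Sylow `r`-subgroup `R` of `B` with
`XR = RX`, `N ∩ XR = X`, and `R` normalizes `X`. -/
theorem stmt11 {G : Type*} [Group G] [Finite G] (p : ℕ) (hp : p.Prime)
    (hsol : IsPSolvableGroup p G)
    (hOp' : ∀ K : Subgroup G, K.Normal → ¬ p ∣ Nat.card K → K = ⊥)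
    (P : Sylow p G) (B : Subgroup G) (h : IsNSSupplementOf (P : Subgroup G) B)
    (N : Subgroup G) (hN : N.Normal) (hNp : IsPGroup p N)
    (hNmax : ∀ M : Subgroup G, M.Normal → IsPGroup p M → M ≤ N) (hNne : N ≠ ⊥)
    (X : Subgroup G) (hXN : X ≤ N) (hXP : X ≤ (P : Subgroup G))
    (hXZ : ∀ x ∈ X, ∀ y ∈ (P : Subgroup G), x * y = y * x)
    (hXcard : Nat.card X = p) :
    ∀ r : ℕ, r.Prime → r ≠ p → r ∣ Nat.card B →
      ∃ R : Sylow r B,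
        (X : Set G) * (((R : Subgroup B).map B.subtype : Subgroup G) : Set G) =
          (((R : Subgroup B).map B.subtype : Subgroup G) : Set G) * (X : Set G) ∧
        (N : Set G) ∩ ((X : Set G) *
          (((R : Subgroup B).map B.subtype : Subgroup G) : Set G)) = (X : Set G) ∧
        ((R : Subgroup B).map B.subtype : Subgroup G) ≤ Subgroup.normalizer (X : Set G) :=
  stmt11_general p hp P B h N hN hNp X hXN hXP hXZ
end

section
/- The group G of order 72 given by the presentation ⟨a, b, c | a^3 = b^3 = c^8 = 1, ab = ba, a^c = b, b^c = ab⟩ (SmallGroup(72,39)) has a maximal subgroup M_1 = [⟨a⟩ × ⟨b⟩]⟨c^2⟩ of order 36 that is not supersoluble, while G itself has all maximal subgroups NS-supplemented; in particular, a group all of whose maximal subgroups are NS-supplemented need not be supersoluble. -/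
open Subgroup Pointwise

/-- Relators of the presentation `⟨a,b,c ∣ a³ = b³ = c⁸ = 1, ab = ba, aᶜ = b, bᶜ = ab⟩`
of SmallGroup(72,39), with generators `0 ↦ a`, `1 ↦ b`, `2 ↦ c`. -/
def rels72 : Set (FreeGroup (Fin 3)) :=
  { (FreeGroup.of 0) ^ 3, (FreeGroup.of 1) ^ 3, (FreeGroup.of 2) ^ 8,
    FreeGroup.of 0 * FreeGroup.of 1 * (FreeGroup.of 0)⁻¹ * (FreeGroup.of 1)⁻¹,
    (FreeGroup.of 2)⁻¹ * FreeGroup.of 0 * FreeGroup.of 2 * (FreeGroup.of 1)⁻¹,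
    (FreeGroup.of 2)⁻¹ * FreeGroup.of 1 * FreeGroup.of 2 *
      (FreeGroup.of 0 * FreeGroup.of 1)⁻¹ }

/-- The group `G = ⟨a,b,c ∣ a³ = b³ = c⁸ = 1, ab = ba, aᶜ = b, bᶜ = ab⟩`,
i.e. SmallGroup(72,39). -/
def G72 := PresentedGroup rels72

instance : Group G72 := by unfold G72; infer_instance

/-- The maximal subgroup `M₁ = [⟨a⟩ × ⟨b⟩]⟨c²⟩` of `G72`. -/
def M72 : Subgroup G72 :=
  Subgroup.closure { PresentedGroup.of 0, PresentedGroup.of 1,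
    (PresentedGroup.of 2 : PresentedGroup rels72) ^ 2 }

/-!
The presented group is isomorphic to the semidirect product `(C₃ × C₃) ⋊ C₈` in which the
generator of `C₈` acts on `C₃ × C₃` through the matrix `[[2, 1], [1, 0]]` of order `8`; already
the square of this matrix acts irreducibly. In this concrete group the finitely many facts
needed are checked by evaluation.

Every nontrivial element of the group, and of its index-two subgroup `M₁ = ⟨a, b, c²⟩`, has a
conjugate that is not one of its powers, so no nontrivial cyclic subgroup is normal and neither
group is supersoluble.

For NS-supplementation take `B = G`. The Sylow `3`-subgroup `V = C₃ × C₃` is normal, so it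
permutes with every subgroup. A maximal subgroup either contains `V`, and is then `M₁`, or meets
`V` trivially and is a `2`-group, whose subgroups lie in a Sylow `2`-subgroup. A normal subgroup
`X` of `M₁` is normal in `G`: by irreducibility `X ∩ V` is `1` or `V`; in the second case `X`
contains the kernel of `G → C₈`, and in the first `X` centralises `V`, forcing `X = 1`.
-/

section General

variable {Γ Δ : Type*} [Group Γ] [Group Δ]

theorem IsSupersolvableGroup.of_surjective {f : Γ →* Δ} (hf : Function.Surjective f)
    (h : IsSupersolvableGroup Γ) : IsSupersolvableGroup Δ := by
  obtain ⟨σ, hmono, h0, ⟨N, hN⟩, hnormal, hstep⟩ := h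
  refine ⟨fun n => (σ n).map f, fun i j hij => map_mono (hmono hij), by simp [h0],
    ⟨N, by simp [hN, map_top_of_surjective f hf]⟩, fun n => (hnormal n).map f hf, fun n => ?_⟩
  obtain ⟨g, hg⟩ := hstep n
  exact ⟨f g, by simp only [hg, Subgroup.map_sup, MonoidHom.map_zpowers]⟩

theorem IsSupersolvableGroup.exists_ne_one_zpowers_normal [Nontrivial Γ]
    (h : IsSupersolvableGroup Γ) : ∃ g : Γ, g ≠ 1 ∧ (zpowers g).Normal := by
  by_contra! hno
  obtain ⟨σ, -, h0, ⟨N, hN⟩, hnormal, hstep⟩ := h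
  have hbot : ∀ n, σ n = ⊥ := by
    intro n
    induction n with
    | zero => exact h0
    | succ n ih =>
      obtain ⟨g, hg⟩ := hstep n
      rw [ih, bot_sup_eq] at hg
      have hg1 : g = 1 := by
        by_contra hg1
        exact hno g hg1 (hg ▸ hnormal (n + 1))
      rw [hg, hg1, zpowers_one_eq_bot]
  exact bot_ne_top ((hbot N).symm.trans hN)

theorem mem_zpowers_iff_exists_lt_of_pow_eq_one {g y : Γ} {n : ℕ} (hn : 0 < n)
    (hg : g ^ n = 1) : y ∈ zpowers g ↔ ∃ k < n, g ^ k = y := by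
  refine ⟨fun hy => ?_, fun ⟨k, _, hk⟩ => hk ▸ npow_mem_zpowers g k⟩
  obtain ⟨m, rfl⟩ :=
    (isOfFinOrder_iff_pow_eq_one.mpr ⟨n, hn, hg⟩).mem_powers_iff_mem_zpowers.mpr hy
  exact ⟨m % n, Nat.mod_lt m hn, (pow_eq_pow_mod m hg).symm⟩

-- The hypotheses are a decidable form of "no nontrivial cyclic subgroup is normal".
theorem not_isSupersolvableGroup_of_exists_conj_ne_pow [Nontrivial Γ] {n : ℕ} (hn : 0 < n)
    (hexp : ∀ g : Γ, g ^ n = 1)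
    (hconj : ∀ g : Γ, g ≠ 1 → ∃ x : Γ, ∀ k < n, g ^ k ≠ x * g * x⁻¹) :
    ¬ IsSupersolvableGroup Γ := by
  intro h
  obtain ⟨g, hg, hnormal⟩ := h.exists_ne_one_zpowers_normal
  obtain ⟨x, hx⟩ := hconj g hg
  obtain ⟨k, hk, hgk⟩ := (mem_zpowers_iff_exists_lt_of_pow_eq_one hn (hexp g)).mp
    (hnormal.conj_mem g (mem_zpowers g) x)
  exact hx k hk hgk

theorem normal_of_ker_le {A : Type*} [CommGroup A] {f : Γ →* A} {X : Subgroup Γ}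
    (hX : f.ker ≤ X) : X.Normal :=
  comap_map_eq_self hX ▸ (X.map f).normal_of_isMulCommutative.comap f

theorem normal_inf_of_sup_eq_top {H N : Subgroup Γ} [hN : N.Normal] [IsMulCommutative N]
    (hHN : H ⊔ N = ⊤) : (H ⊓ N).Normal := by
  rw [← normalizer_eq_top_iff, eq_top_iff, ← hHN, sup_le_iff]
  refine ⟨le_trans (le_inf H.le_normalizer ?_) inf_normalizer_le_normalizer_inf,
    (le_centralizer (H := N)).trans ((centralizer_le inf_le_right).trans
      (centralizer_le_normalizer _))⟩
  rw [normalizer_eq_top_iff.mpr hN]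
  exact le_top

def SylowPermutable (p : ℕ) (X : Subgroup Γ) : Prop :=
  ∃ P : Sylow p Γ, (X : Set Γ) * P = P * X

theorem SylowPermutable.of_le_normalizer {p : ℕ} {X : Subgroup Γ} (P : Sylow p Γ)
    (hX : X ≤ normalizer (P : Set Γ)) : SylowPermutable p X :=
  ⟨P, set_mul_normalizer_comm (X : Set Γ) (P : Subgroup Γ) hX⟩

theorem SylowPermutable.of_normal (p : ℕ) {X : Subgroup Γ} [X.Normal] : SylowPermutable p X :=
  let ⟨P⟩ := Sylow.nonempty (p := p) (G := Γ)
  ⟨P, (set_mul_normal_comm P X).symm⟩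

theorem SylowPermutable.of_map_mulEquiv {p : ℕ} {X : Subgroup Γ} (e : Γ ≃* Δ)
    (h : SylowPermutable p (X.map e.toMonoidHom)) : SylowPermutable p X := by
  obtain ⟨P, hP⟩ := h
  let Q := P.comapOfInjective e.toMonoidHom e.injective (by simp)
  have hQ : e '' (Q : Set Γ) = P := Set.image_preimage_eq _ e.surjective
  refine ⟨Q, Set.image_injective.mpr e.injective ?_⟩
  simpa only [Set.image_mul, hQ, coe_map, MulEquiv.coe_toMonoidHom] using hP

theorem isNSSupplementOf_top {A : Subgroup Γ}
    (h : ∀ X ≤ A, A ≤ normalizer (X : Set Γ) →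
      ∀ p : ℕ, p.Prime → p ∣ Nat.card Γ → SylowPermutable p X) :
    IsNSSupplementOf A ⊤ := by
  refine ⟨by rw [coe_top]; exact Set.mul_univ ⟨1, A.one_mem⟩, fun X hXA hX p hp hpd => ?_⟩
  obtain ⟨P, hP⟩ := h X hXA ((normal_subgroupOf_iff_le_normalizer hXA).mp hX) p hp
    (card_top (G := Γ) ▸ hpd)
  exact ⟨P.subtype le_top, by rwa [Sylow.coe_subtype, map_subgroupOf_eq_of_le le_top]⟩

def zmodPowHom {M : Type*} [Monoid M] {n : ℕ} [NeZero n] (g : M) (hg : g ^ n = 1) :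
    Multiplicative (ZMod n) →* M where
  toFun k := g ^ k.toAdd.val
  map_one' := by simp
  map_mul' x y := by
    simp only [toAdd_mul, ZMod.val_add, ← pow_add]
    exact (pow_eq_pow_mod _ hg).symm

end General

namespace K72

abbrev C3 := Multiplicative (ZMod 3)
abbrev C8 := Multiplicative (ZMod 8)

/-- Conjugation by `c`: `a ↦ a²b`, `b ↦ a`, as the relations `aᶜ = b`, `bᶜ = ab` force. -/
def σ : C3 × C3 ≃* C3 × C3 where
  toFun v := (v.1 ^ 2 * v.2, v.1)
  invFun v := (v.2, v.1 * v.2)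
  left_inv := by decide
  right_inv := by decide
  map_mul' := by decide

theorem σ_pow_eight : σ ^ 8 = 1 := by
  refine MulEquiv.ext fun v => ?_
  revert v
  decide

def φ : C8 →* MulAut (C3 × C3) := zmodPowHom σ σ_pow_eight

end K72

open K72 in
abbrev K72 := (C3 × C3) ⋊[φ] C8

namespace K72

open SemidirectProduct

instance : Fintype K72 := Fintype.ofEquiv _ equivProd.symm

def a : K72 := inl (.ofAdd 1, 1)
def b : K72 := inl (1, .ofAdd 1)
def c : K72 := inr (.ofAdd 1)

def V : Subgroup K72 := (rightHom : K72 →* C8).ker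

def parity : C8 →* Multiplicative (ZMod 2) :=
  (ZMod.castHom (by norm_num : 2 ∣ 8) (ZMod 2)).toAddMonoidHom.toMultiplicative

def M : Subgroup K72 := (parity.comp rightHom).ker

instance : DecidablePred (· ∈ V) := MonoidHom.decidableMemKer _
instance : DecidablePred (· ∈ M) := MonoidHom.decidableMemKer _

instance : V.Normal := MonoidHom.normal_ker _

instance : IsMulCommutative V := by
  rw [V, ← range_inl_eq_ker_rightHom]
  infer_instance

set_option maxRecDepth 10000

theorem card_eq : Nat.card K72 = 72 := by
  rw [Nat.card_eq_fintype_card]; decide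

theorem card_V : Nat.card V = 9 := by
  rw [Nat.card_eq_fintype_card]; decide

theorem card_M : Nat.card M = 36 := by
  rw [Nat.card_eq_fintype_card]; decide

theorem pow_24_eq_one : ∀ x : K72, x ^ 24 = 1 := by decide

theorem exists_conj_ne_pow :
    ∀ g : K72, g ≠ 1 → ∃ x : K72, ∀ k < 24, g ^ k ≠ x * g * x⁻¹ := by
  decide

theorem exists_conj_ne_pow_M :
    ∀ g : M, g ≠ 1 → ∃ x : M, ∀ k < 24, g ^ k ≠ x * g * x⁻¹ := by
  decide

theorem exists_pow_mul_conj_pow_eq : ∀ w ∈ V, w ≠ 1 → ∀ v ∈ V,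
    ∃ i < 3, ∃ j < 3, w ^ i * (c ^ 2 * w * (c ^ 2)⁻¹) ^ j = v := by
  decide

theorem mem_V_of_forall_commute : ∀ x ∈ M, (∀ w ∈ V, x * w = w * x) → x ∈ V := by
  decide

theorem exists_mul_pow_inv_mem_V : ∀ x ∉ M, ∀ y : K72, ∃ k < 8, y * (x ^ k)⁻¹ ∈ V := by
  decide

theorem exists_pow_mul_pow_mul_pow_eq_of_mem_M :
    ∀ x ∈ M, ∃ i < 3, ∃ j < 3, ∃ k < 4, a ^ i * b ^ j * (c ^ 2) ^ k = x := by
  decide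

theorem exists_pow_mul_pow_mul_pow_eq :
    ∀ x : K72, ∃ i < 3, ∃ j < 3, ∃ k < 8, a ^ i * b ^ j * c ^ k = x := by
  decide

theorem exists_pow_mul_pow_eq :
    ∀ v : C3 × C3, ∃ i < 3, ∃ j < 3, (.ofAdd 1, 1) ^ i * (1, .ofAdd 1) ^ j = v := by
  decide

theorem a_mem_M : a ∈ M := by decide
theorem b_mem_M : b ∈ M := by decide
theorem c_sq_mem_M : c ^ 2 ∈ M := by decide
theorem c_notMem_M : c ∉ M := by decide

theorem hom_ext_C3_C3 {Γ : Type*} [Monoid Γ] {f g : C3 × C3 →* Γ}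
    (h₁ : f (.ofAdd 1, 1) = g (.ofAdd 1, 1)) (h₂ : f (1, .ofAdd 1) = g (1, .ofAdd 1)) :
    f = g := by
  refine MonoidHom.ext fun v => ?_
  obtain ⟨i, -, j, -, rfl⟩ := exists_pow_mul_pow_eq v
  simp only [map_mul, map_pow, h₁, h₂]

theorem hom_ext {Γ : Type*} [Monoid Γ] {f g : K72 →* Γ} (ha : f a = g a) (hb : f b = g b)
    (hc : f c = g c) : f = g := by
  refine MonoidHom.ext fun x => ?_
  obtain ⟨i, -, j, -, k, -, rfl⟩ := exists_pow_mul_pow_mul_pow_eq x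
  simp only [map_mul, map_pow, ha, hb, hc]

theorem closure_eq_M : closure {a, b, c ^ 2} = M := by
  refine le_antisymm ((closure_le _).mpr ?_) fun x hx => ?_
  · rintro x (rfl | rfl | rfl)
    exacts [a_mem_M, b_mem_M, c_sq_mem_M]
  · obtain ⟨i, -, j, -, k, -, rfl⟩ := exists_pow_mul_pow_mul_pow_eq_of_mem_M x hx
    exact mul_mem (mul_mem (pow_mem (subset_closure (by simp)) i)
      (pow_mem (subset_closure (by simp)) j)) (pow_mem (subset_closure (by simp)) k)

theorem V_le_M : V ≤ M := fun x hx => by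
  simp only [M, V, MonoidHom.mem_ker, MonoidHom.comp_apply] at hx ⊢
  rw [hx, map_one]

theorem eq_bot_or_eq_V_of_conj_mem {W : Subgroup K72} (hWV : W ≤ V)
    (hW : ∀ w ∈ W, c ^ 2 * w * (c ^ 2)⁻¹ ∈ W) : W = ⊥ ∨ W = V := by
  rcases W.bot_or_exists_ne_one with hbot | ⟨w, hw, hw1⟩
  · exact Or.inl hbot
  · refine Or.inr (le_antisymm hWV fun v hv => ?_)
    obtain ⟨i, -, j, -, rfl⟩ := exists_pow_mul_conj_pow_eq w (hWV hw) hw1 v hv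
    exact W.mul_mem (W.pow_mem hw i) (W.pow_mem (hW w hw) j)

theorem eq_top_of_V_le_of_not_le_M {J : Subgroup K72} (hV : V ≤ J) (hJ : ¬ J ≤ M) :
    J = ⊤ := by
  obtain ⟨x, hxJ, hxM⟩ := SetLike.not_le_iff_exists.mp hJ
  refine eq_top_iff.mpr fun y _ => ?_
  obtain ⟨k, -, hk⟩ := exists_mul_pow_inv_mem_V x hxM y
  simpa using J.mul_mem (hV hk) (J.pow_mem hxJ k)

theorem isCoatom_M : IsCoatom M :=
  ⟨fun h => c_notMem_M (h ▸ mem_top c),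
    fun _ hJ => eq_top_of_V_le_of_not_le_M (V_le_M.trans hJ.le) (not_le_of_gt hJ)⟩

theorem isPGroup_two_of_inf_V_eq_bot {N : Subgroup K72} (hN : N ⊓ V = ⊥) : IsPGroup 2 N := by
  have hC8 : IsPGroup 2 C8 := IsPGroup.of_card (n := 3) (by simp)
  refine hC8.of_injective ((rightHom : K72 →* C8).comp N.subtype)
    ((injective_iff_map_eq_one _).mpr fun x hx => Subtype.ext ?_)
  have hxV : (x : K72) ∈ N ⊓ V := ⟨x.2, hx⟩
  rwa [hN, mem_bot] at hxV

theorem eq_M_or_isPGroup_two_of_isCoatom {N : Subgroup K72} (hN : IsCoatom N) :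
    N = M ∨ IsPGroup 2 N := by
  by_cases hV : V ≤ N
  · have hNM : N ≤ M := fun x hx => by
      by_contra hxM
      exact hN.1 (eq_top_of_V_le_of_not_le_M hV fun h => hxM (h hx))
    exact Or.inl ((hN.le_iff.mp hNM).resolve_left isCoatom_M.1).symm
  · have hnormal := normal_inf_of_sup_eq_top (hN.2 _ (left_lt_sup.mpr hV))
    refine Or.inr (isPGroup_two_of_inf_V_eq_bot ?_)
    refine (eq_bot_or_eq_V_of_conj_mem inf_le_right fun w hw => ?_).resolve_right
      fun h => hV (h ▸ inf_le_left)
    exact hnormal.conj_mem w hw _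

theorem normal_of_le_M_of_M_le_normalizer {X : Subgroup K72} (hXM : X ≤ M)
    (hX : M ≤ normalizer (X : Set K72)) : X.Normal := by
  have hconj : ∀ m ∈ M, ∀ x ∈ X, m * x * m⁻¹ ∈ X := fun m hm x hx =>
    (mem_normalizer_iff.mp (hX hm) x).mp hx
  have hVnormal : V.Normal := inferInstance
  rcases eq_bot_or_eq_V_of_conj_mem (W := X ⊓ V) inf_le_right
    (fun w hw => ⟨hconj _ c_sq_mem_M w hw.1, hVnormal.conj_mem w hw.2 _⟩) with hbot | hV
  · suffices X = ⊥ from this ▸ inferInstance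
    refine eq_bot_iff.mpr fun x hx => hbot ▸ ⟨hx, mem_V_of_forall_commute x (hXM hx) ?_⟩
    intro w hw
    have hcomm : x * w * x⁻¹ * w⁻¹ ∈ X ⊓ V :=
      ⟨by simpa [mul_assoc] using X.mul_mem hx (hconj w (V_le_M hw) x⁻¹ (X.inv_mem hx)),
        V.mul_mem (hVnormal.conj_mem w hw x) (V.inv_mem hw)⟩
    rwa [hbot, mem_bot, mul_inv_eq_one, mul_inv_eq_iff_eq_mul] at hcomm
  · exact normal_of_ker_le (f := (rightHom : K72 →* C8)) (hV ▸ inf_le_left : V ≤ X)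

def sylowV : Sylow 3 K72 :=
  have : Fact (Nat.Prime 3) := ⟨Nat.prime_three⟩
  (IsPGroup.of_card (n := 2) card_V).toSylow (by
    have h := V.card_mul_index
    rw [card_V, card_eq] at h
    omega)

theorem sylowPermutable_of_isCoatom {N X : Subgroup K72} (hN : IsCoatom N) (hXN : X ≤ N)
    (hX : N ≤ normalizer (X : Set K72)) {p : ℕ} (hp : p.Prime) (hpd : p ∣ Nat.card K72) :
    SylowPermutable p X := by
  have h72 : p ∣ 2 ^ 3 * 3 ^ 2 := by rwa [card_eq] at hpd
  rcases (Nat.Prime.dvd_mul hp).mp h72 with h2 | h3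
  · obtain rfl := (Nat.prime_dvd_prime_iff_eq hp Nat.prime_two).mp (hp.dvd_of_dvd_pow h2)
    rcases eq_M_or_isPGroup_two_of_isCoatom hN with rfl | hN2
    · have := normal_of_le_M_of_M_le_normalizer hXN hX
      exact .of_normal 2
    · obtain ⟨P, hP⟩ := hN2.exists_le_sylow
      exact .of_le_normalizer P (hXN.trans (hP.trans le_normalizer))
  · obtain rfl := (Nat.prime_dvd_prime_iff_eq hp Nat.prime_three).mp (hp.dvd_of_dvd_pow h3)
    refine .of_le_normalizer sylowV ?_
    change X ≤ normalizer (V : Set K72)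
    rw [normalizer_eq_top_iff.mpr (inferInstance : V.Normal)]
    exact le_top

theorem not_isSupersolvableGroup : ¬ IsSupersolvableGroup K72 :=
  have : Nontrivial K72 := ⟨⟨a, 1, by decide⟩⟩
  not_isSupersolvableGroup_of_exists_conj_ne_pow (by norm_num) pow_24_eq_one exists_conj_ne_pow

theorem not_isSupersolvableGroup_M : ¬ IsSupersolvableGroup M :=
  have : Nontrivial M := Finite.one_lt_card_iff_nontrivial.mp (by rw [card_M]; norm_num)
  not_isSupersolvableGroup_of_exists_conj_ne_pow (by norm_num)
    (fun g => Subtype.ext (pow_24_eq_one g)) exists_conj_ne_pow_M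

end K72

namespace G72

open K72 (C3 C8 σ)

def a : G72 := PresentedGroup.of 0
def b : G72 := PresentedGroup.of 1
def c : G72 := PresentedGroup.of 2

theorem a_pow_three : a ^ 3 = 1 := by
  have h := PresentedGroup.one_of_mem (show FreeGroup.of 0 ^ 3 ∈ rels72 by simp [rels72])
  rwa [map_pow] at h

theorem b_pow_three : b ^ 3 = 1 := by
  have h := PresentedGroup.one_of_mem (show FreeGroup.of 1 ^ 3 ∈ rels72 by simp [rels72])
  rwa [map_pow] at h

theorem c_pow_eight : c ^ 8 = 1 := by
  have h := PresentedGroup.one_of_mem (show FreeGroup.of 2 ^ 8 ∈ rels72 by simp [rels72])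
  rwa [map_pow] at h

theorem commute_a_b : Commute a b := by
  have h := PresentedGroup.one_of_mem (show FreeGroup.of 0 * FreeGroup.of 1 *
    (FreeGroup.of 0)⁻¹ * (FreeGroup.of 1)⁻¹ ∈ rels72 by simp [rels72])
  simp only [map_mul, map_inv] at h
  exact commutatorElement_eq_one_iff_mul_comm.mp h

theorem c_inv_mul_a_mul_c : c⁻¹ * a * c = b := by
  have h := PresentedGroup.one_of_mem (show (FreeGroup.of 2)⁻¹ * FreeGroup.of 0 *
    FreeGroup.of 2 * (FreeGroup.of 1)⁻¹ ∈ rels72 by simp [rels72])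
  simp only [map_mul, map_inv] at h
  exact mul_inv_eq_one.mp h

theorem c_inv_mul_b_mul_c : c⁻¹ * b * c = a * b := by
  have h := PresentedGroup.one_of_mem (show (FreeGroup.of 2)⁻¹ * FreeGroup.of 1 *
    FreeGroup.of 2 * (FreeGroup.of 0 * FreeGroup.of 1)⁻¹ ∈ rels72 by simp [rels72])
  simp only [map_mul, map_inv] at h
  exact mul_inv_eq_one.mp h

theorem c_mul_b_mul_c_inv : c * b * c⁻¹ = a := by
  rw [← c_inv_mul_a_mul_c]
  group

theorem c_mul_a_mul_c_inv : c * a * c⁻¹ = a ^ 2 * b := by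
  have ha : a⁻¹ = a ^ 2 := inv_eq_of_mul_eq_one_right (by rw [← pow_succ', a_pow_three])
  calc c * a * c⁻¹ = c * (a * b) * c⁻¹ * (c * b * c⁻¹)⁻¹ := by group
    _ = b * a⁻¹ := by rw [← c_inv_mul_b_mul_c, c_mul_b_mul_c_inv]; group
    _ = a ^ 2 * b := by rw [ha, (commute_a_b.pow_left 2).eq]

def toK72 : G72 →* K72 := PresentedGroup.toGroup (f := ![K72.a, K72.b, K72.c]) (by
  rintro r (rfl | rfl | rfl | rfl | rfl | rfl) <;>
    simp only [map_pow, map_mul, map_inv, FreeGroup.lift_apply_of] <;> decide)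

theorem toK72_a : toK72 a = K72.a := PresentedGroup.toGroup.of _
theorem toK72_b : toK72 b = K72.b := PresentedGroup.toGroup.of _
theorem toK72_c : toK72 c = K72.c := PresentedGroup.toGroup.of _

def ofC3C3 : C3 × C3 →* G72 :=
  (zmodPowHom a a_pow_three).noncommCoprod (zmodPowHom b b_pow_three)
    fun _ _ => commute_a_b.pow_pow _ _

def ofC8 : C8 →* G72 := zmodPowHom c c_pow_eight

theorem ofC3C3_σ (v : C3 × C3) : ofC3C3 (σ v) = c * ofC3C3 v * c⁻¹ := by
  suffices h : ofC3C3.comp σ.toMonoidHom = (MulAut.conj c).toMonoidHom.comp ofC3C3 from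
    DFunLike.congr_fun h v
  apply K72.hom_ext_C3_C3 <;>
    simp [ofC3C3, σ, zmodPowHom, ZMod.val_one_eq_one_mod, ZMod.val_ofNat, c_mul_a_mul_c_inv,
      c_mul_b_mul_c_inv]

theorem ofC3C3_σ_pow (k : ℕ) (v : C3 × C3) :
    ofC3C3 ((σ ^ k) v) = c ^ k * ofC3C3 v * (c ^ k)⁻¹ := by
  induction k generalizing v with
  | zero => simp
  | succ k ih => rw [pow_succ, MulAut.mul_apply, ih, ofC3C3_σ, pow_succ]; group

def ofK72 : K72 →* G72 :=
  SemidirectProduct.lift ofC3C3 ofC8 fun _ => MonoidHom.ext fun v => ofC3C3_σ_pow _ v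

theorem ofK72_a : ofK72 K72.a = a := by
  simp [ofK72, K72.a, ofC3C3, zmodPowHom, ZMod.val_one_eq_one_mod]

theorem ofK72_b : ofK72 K72.b = b := by
  simp [ofK72, K72.b, ofC3C3, zmodPowHom, ZMod.val_one_eq_one_mod]

theorem ofK72_c : ofK72 K72.c = c := by
  simp [ofK72, K72.c, ofC8, zmodPowHom, ZMod.val_one_eq_one_mod]

theorem ofK72_comp_toK72 : ofK72.comp toK72 = MonoidHom.id G72 := by
  refine PresentedGroup.ext fun i => ?_
  fin_cases i
  · exact (congrArg ofK72 toK72_a).trans ofK72_a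
  · exact (congrArg ofK72 toK72_b).trans ofK72_b
  · exact (congrArg ofK72 toK72_c).trans ofK72_c

theorem toK72_comp_ofK72 : toK72.comp ofK72 = MonoidHom.id K72 :=
  K72.hom_ext ((congrArg toK72 ofK72_a).trans toK72_a) ((congrArg toK72 ofK72_b).trans toK72_b)
    ((congrArg toK72 ofK72_c).trans toK72_c)

def equivK72 : G72 ≃* K72 :=
  MonoidHom.toMulEquiv toK72 ofK72 ofK72_comp_toK72 toK72_comp_ofK72

theorem equivK72_apply (x : G72) : equivK72 x = toK72 x := rfl

theorem M72_eq_closure : M72 = closure {a, b, c ^ 2} := rfl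

theorem map_M72 : M72.map equivK72.toMonoidHom = K72.M := by
  rw [← K72.closure_eq_M, M72_eq_closure, MonoidHom.map_closure]
  simp only [Set.image_insert_eq, Set.image_singleton, map_pow, MulEquiv.coe_toMonoidHom,
    equivK72_apply, toK72_a, toK72_b, toK72_c]

noncomputable def equivM : M72 ≃* K72.M :=
  (M72.equivMapOfInjective _ equivK72.injective).trans (MulEquiv.subgroupCongr map_M72)

theorem isCoatom_M72 : IsCoatom M72 := by
  refine (OrderIso.isCoatom_iff equivK72.mapSubgroup M72).mp ?_
  rw [show equivK72.mapSubgroup M72 = K72.M from map_M72]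
  exact K72.isCoatom_M

theorem isNSSupplemented_of_isCoatom {N : Subgroup G72} (hN : IsCoatom N) :
    IsNSSupplemented N := by
  refine ⟨⊤, isNSSupplementOf_top fun X hXN hX p hp hpd => ?_⟩
  refine SylowPermutable.of_map_mulEquiv equivK72 ?_
  exact K72.sylowPermutable_of_isCoatom ((OrderIso.isCoatom_iff equivK72.mapSubgroup N).mpr hN)
    (map_mono hXN) ((map_mono hX).trans (le_normalizer_map _)) hp
    (by rwa [← Nat.card_congr equivK72.toEquiv])

end G72

/-- The group SmallGroup(72,39) has order 72, its subgroup
`M₁ = [⟨a⟩ × ⟨b⟩]⟨c²⟩` is maximal of order 36 and not supersoluble, and yet every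
maximal subgroup of the group is NS-supplemented; hence a group all of whose maximal
subgroups are NS-supplemented need not be supersoluble. -/
theorem stmt15 :
    Nat.card G72 = 72 ∧
    IsCoatom M72 ∧ Nat.card M72 = 36 ∧ ¬ IsSupersolvableGroup M72 ∧
    (∀ M : Subgroup G72, IsCoatom M → IsNSSupplemented M) ∧
    ¬ IsSupersolvableGroup G72 :=
  open G72 in
  ⟨(Nat.card_congr equivK72.toEquiv).trans K72.card_eq,
    isCoatom_M72,
    (Nat.card_congr equivM.toEquiv).trans K72.card_M,
    fun h => K72.not_isSupersolvableGroup_M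
      (h.of_surjective (f := equivM.toMonoidHom) equivM.surjective),
    fun _ => isNSSupplemented_of_isCoatom,
    fun h => K72.not_isSupersolvableGroup
      (h.of_surjective (f := equivK72.toMonoidHom) equivK72.surjective)⟩
end
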